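/- arXiv:1404.7641 — 3 statements merged into one kernel-verified Lean document; each statement's English description precedes it below -/
import Mathlib

section
/- If P is a symplectic matrix in Sp(2n,ℝ) whose spectrum equals {1}, then there exists a Lagrangian subspace V of ℝ^{2n} that is invariant under P. -/
open Matrix

/-- The standard symplectic form on `ℝ^{2n}` (indexed by `Fin n ⊕ Fin n`). -/
noncomputable def symplForm (n : ℕ) (u v : (Fin n ⊕ Fin n) → ℝ) : ℝ :=
  u ⬝ᵥ (Matrix.J (Fin n) ℝ).mulVec v

/-- A subspace is isotropic if the symplectic form vanishes on it. -/
def IsIsotropic (n : ℕ) (V : Submodule ℝ ((Fin n ⊕ Fin n) → ℝ)) : Prop :=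
  ∀ u ∈ V, ∀ v ∈ V, symplForm n u v = 0

/-- A subspace is Lagrangian if it is isotropic of dimension `n`. -/
def IsLagrangian (n : ℕ) (V : Submodule ℝ ((Fin n ⊕ Fin n) → ℝ)) : Prop :=
  IsIsotropic n V ∧ Module.finrank ℝ V = n

namespace InvariantLagrangianAux

open Polynomial Module LinearMap

variable {n : ℕ}

/-- The symplectic form as a bilinear form. -/
noncomputable def B (n : ℕ) : LinearMap.BilinForm ℝ ((Fin n ⊕ Fin n) → ℝ) :=
  Matrix.toBilin' (Matrix.J (Fin n) ℝ)

lemma B_apply (u v : (Fin n ⊕ Fin n) → ℝ) : B n u v = symplForm n u v :=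
  Matrix.toBilin'_apply' _ _ _

lemma symplForm_antisymm (u v : (Fin n ⊕ Fin n) → ℝ) :
    symplForm n u v = - symplForm n v u := by
  unfold symplForm
  rw [Matrix.dotProduct_mulVec, ← Matrix.mulVec_transpose, Matrix.J_transpose,
    Matrix.neg_mulVec, neg_dotProduct, dotProduct_comm]

lemma B_alt : (B n).IsAlt := by
  intro x
  have h := symplForm_antisymm (n := n) x x
  have h2 := B_apply (n := n) x x
  rw [h2]; linarith

lemma B_refl : (B n).IsRefl := (B_alt).isRefl

lemma B_nondeg : (B n).Nondegenerate := by
  apply Matrix.Nondegenerate.toBilin'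
  apply Matrix.nondegenerate_of_det_ne_zero
  exact (Matrix.isUnit_det_J (Fin n) ℝ).ne_zero

lemma B_symplectic {P : Matrix (Fin n ⊕ Fin n) (Fin n ⊕ Fin n) ℝ}
    (hP : P ∈ Matrix.symplecticGroup (Fin n) ℝ) (u v : (Fin n ⊕ Fin n) → ℝ) :
    B n (P *ᵥ u) (P *ᵥ v) = B n u v := by
  have h := (SymplecticGroup.mem_iff').mp hP
  show (Matrix.toBilin' (Matrix.J (Fin n) ℝ)) _ _ = (Matrix.toBilin' (Matrix.J (Fin n) ℝ)) _ _
  rw [Matrix.toBilin'_apply', Matrix.toBilin'_apply']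
  rw [Matrix.mulVec_mulVec, Matrix.dotProduct_mulVec, ← Matrix.vecMul_transpose,
    Matrix.vecMul_vecMul, ← Matrix.mul_assoc, h, ← Matrix.dotProduct_mulVec]

set_option synthInstance.maxHeartbeats 1000000 in
set_option maxHeartbeats 1000000 in
lemma isNilpotent_of_spectrum (P : Matrix (Fin n ⊕ Fin n) (Fin n ⊕ Fin n) ℝ)
    (hspec : spectrum ℂ (P.map (algebraMap ℝ ℂ)) = {1}) : IsNilpotent (P - 1) := by
  set Q := P.map (algebraMap ℝ ℂ) with hQdef
  set f := Matrix.toLinAlgEquiv' Q with hf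
  have hQspec : spectrum ℂ f = {1} := by
    rw [hf, AlgEquiv.spectrum_eq]; exact hspec
  have hint : IsIntegral ℂ f := IsIntegral.of_finite ℂ f
  have hmon := minpoly.monic hint
  have hsp : (minpoly ℂ f).Splits := IsAlgClosed.splits _
  set d := (minpoly ℂ f).natDegree with hd
  have hroots : (minpoly ℂ f).roots = Multiset.replicate d 1 := by
    have hcard : (minpoly ℂ f).roots.card = d := by
      have := hsp.natDegree_eq_card_roots
      omega
    rw [Multiset.eq_replicate]
    refine ⟨hcard, fun b hb => ?_⟩
    have hev : Module.End.HasEigenvalue f b :=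
      (Module.End.hasEigenvalue_iff_isRoot).mpr (Polynomial.isRoot_of_mem_roots hb)
    have hmem := Module.End.hasEigenvalue_iff_mem_spectrum.mp hev
    rw [hQspec] at hmem
    exact hmem
  have hq : minpoly ℂ f = (X - C 1) ^ d := by
    conv_lhs => rw [hsp.eq_prod_roots_of_monic hmon]
    rw [hroots, Multiset.map_replicate, Multiset.prod_replicate]
  have h0 : (f - 1) ^ d = 0 := by
    have ha := minpoly.aeval ℂ f
    rw [hq] at ha
    simpa using ha
  have hQ0 : (Q - 1) ^ d = 0 := by
    apply (Matrix.toLinAlgEquiv' :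
      Matrix (Fin n ⊕ Fin n) (Fin n ⊕ Fin n) ℂ ≃ₐ[ℂ] _).injective
    rw [map_pow, map_sub, _root_.map_one, map_zero]
    exact h0
  refine ⟨d, ?_⟩
  have hinj : Function.Injective
      ((algebraMap ℝ ℂ).mapMatrix :
        Matrix (Fin n ⊕ Fin n) (Fin n ⊕ Fin n) ℝ →+* Matrix (Fin n ⊕ Fin n) (Fin n ⊕ Fin n) ℂ) :=
    Matrix.map_injective (algebraMap ℝ ℂ).injective
  apply hinj
  rw [map_pow, map_sub, _root_.map_one, map_zero]
  have : (algebraMap ℝ ℂ).mapMatrix P = Q := rfl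
  rw [this]
  exact hQ0

lemma grow (P : Matrix (Fin n ⊕ Fin n) (Fin n ⊕ Fin n) ℝ)
    (hP : P ∈ Matrix.symplecticGroup (Fin n) ℝ)
    (hnil : IsNilpotent (P - 1)) :
    ∀ j, j ≤ n → ∃ W : Submodule ℝ ((Fin n ⊕ Fin n) → ℝ),
      IsIsotropic n W ∧ W.map (Matrix.mulVecLin P) = W ∧ Module.finrank ℝ W = j := by
  classical
  have hdet : IsUnit P.det := SymplecticGroup.symplectic_det hP
  have hInv : Invertible P := P.invertibleOfIsUnitDet hdet
  have htot : Module.finrank ℝ ((Fin n ⊕ Fin n) → ℝ) = n + n := by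
    rw [Module.finrank_fintype_fun_eq_card]
    simp
  intro j
  induction j with
  | zero =>
    intro _
    refine ⟨⊥, fun u hu v hv => ?_, by simp, by simp⟩
    simp only [Submodule.mem_bot] at hu hv
    simp [hu, hv, symplForm]
  | succ j ih =>
    intro hj
    obtain ⟨W, hiso, hinv, hrank⟩ := ih (by omega)
    -- the symplectic orthogonal of W
    set O := (B n).orthogonal W with hO
    have hWO : W ≤ O := by
      intro w hw
      rw [LinearMap.BilinForm.mem_orthogonal_iff]
      intro u hu
      show B n u w = 0
      rw [B_apply]
      exact hiso u hu w hw
    have hOrank : Module.finrank ℝ O = (n + n) - j := by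
      rw [hO, LinearMap.BilinForm.finrank_orthogonal B_nondeg W, htot, hrank]
    have hPmem : ∀ w ∈ W, P *ᵥ w ∈ W := by
      intro w hw
      rw [← hinv]
      exact ⟨w, hw, rfl⟩
    have hPO : ∀ v ∈ O, P *ᵥ v ∈ O := by
      intro v hv
      rw [LinearMap.BilinForm.mem_orthogonal_iff]
      intro u hu
      rw [← hinv] at hu
      obtain ⟨w', hw', rfl⟩ := hu
      show B n (Matrix.mulVecLin P w') (P *ᵥ v) = 0
      rw [Matrix.mulVecLin_apply, B_symplectic hP]
      exact hv w' hw'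
    -- the nilpotent part
    set N := P - 1 with hN
    have hNapp : ∀ x, N *ᵥ x = P *ᵥ x - x := by
      intro x
      rw [hN, Matrix.sub_mulVec, Matrix.one_mulVec]
    have hNO : ∀ v ∈ O, N *ᵥ v ∈ O := by
      intro v hv
      rw [hNapp]
      exact O.sub_mem (hPO v hv) hv
    obtain ⟨m, hm⟩ := hnil
    -- pick u in O not in W
    have hlt : Module.finrank ℝ W < Module.finrank ℝ O := by
      rw [hrank, hOrank]; omega
    have hnle : ¬ O ≤ W := fun h => absurd (Submodule.finrank_mono h) (by omega)
    obtain ⟨u, hu, huW⟩ := SetLike.not_le_iff_exists.mp hnle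
    have hex : ∃ k, N ^ k *ᵥ u ∈ W := by
      refine ⟨m, ?_⟩
      rw [hm, Matrix.zero_mulVec]
      exact W.zero_mem
    set j0 := Nat.find hex with hj0
    have hj0spec : N ^ j0 *ᵥ u ∈ W := Nat.find_spec hex
    have hj0pos : 0 < j0 := by
      rcases Nat.eq_zero_or_pos j0 with h | h
      swap
      · exact h
      · exfalso
        apply huW
        have := hj0spec
        rw [h, pow_zero, Matrix.one_mulVec] at this
        exact this
    set v := N ^ (j0 - 1) *ᵥ u with hv
    have hvW : v ∉ W := Nat.find_min hex (Nat.sub_lt hj0pos one_pos)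
    have hpowO : ∀ k, N ^ k *ᵥ u ∈ O := by
      intro k
      induction k with
      | zero => rw [pow_zero, Matrix.one_mulVec]; exact hu
      | succ k ihk =>
        rw [pow_succ', ← Matrix.mulVec_mulVec]
        exact hNO _ ihk
    have hvO : v ∈ O := hpowO _
    have hNv : N *ᵥ v ∈ W := by
      have : N *ᵥ v = N ^ j0 *ᵥ u := by
        have hj : j0 - 1 + 1 = j0 := Nat.succ_pred_eq_of_pos hj0pos
        rw [hv, Matrix.mulVec_mulVec, ← pow_succ', hj]
      rw [this]
      exact hj0spec
    have hv0 : v ≠ 0 := fun h => hvW (h ▸ W.zero_mem)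
    -- the new subspace
    refine ⟨W ⊔ (ℝ ∙ v), ?_, ?_, ?_⟩
    · -- isotropic
      intro x hx y hy
      obtain ⟨wx, hwx, zx, hzx, rfl⟩ := Submodule.mem_sup.mp hx
      obtain ⟨wy, hwy, zy, hzy, rfl⟩ := Submodule.mem_sup.mp hy
      obtain ⟨cx, rfl⟩ := Submodule.mem_span_singleton.mp hzx
      obtain ⟨cy, rfl⟩ := Submodule.mem_span_singleton.mp hzy
      have hWv : ∀ w ∈ W, B n w v = 0 := fun w hw => hvO w hw
      have h1 : B n wx wy = 0 := by rw [B_apply]; exact hiso _ hwx _ hwy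
      have h2 : B n wx v = 0 := hWv _ hwx
      have h3 : B n v wy = 0 := B_refl _ _ (hWv _ hwy)
      have h4 : B n v v = 0 := B_alt v
      rw [← B_apply]
      simp only [LinearMap.map_add, LinearMap.add_apply, LinearMap.map_smul,
        LinearMap.smul_apply, smul_eq_mul, h1, h2, h3, h4]
      ring
    · -- invariant
      have hle : (W ⊔ (ℝ ∙ v)).map (Matrix.mulVecLin P) ≤ W ⊔ (ℝ ∙ v) := by
        rintro _ ⟨x, hx, rfl⟩
        obtain ⟨w, hw, z, hz, rfl⟩ := Submodule.mem_sup.mp hx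
        obtain ⟨c, rfl⟩ := Submodule.mem_span_singleton.mp hz
        have hPv : P *ᵥ v = v + N *ᵥ v := by
          rw [hNapp]; abel
        show P *ᵥ (w + c • v) ∈ W ⊔ (ℝ ∙ v)
        rw [Matrix.mulVec_add, Matrix.mulVec_smul, hPv, smul_add]
        refine Submodule.add_mem _ (Submodule.mem_sup_left (hPmem w hw)) ?_
        refine Submodule.add_mem _ ?_ (Submodule.mem_sup_left (W.smul_mem c hNv))
        exact Submodule.mem_sup_right (Submodule.smul_mem _ c
          (Submodule.mem_span_singleton_self v))
      apply Submodule.eq_of_le_of_finrank_le hle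
      have hcoe : ((P.toLinearEquiv' hInv : (Fin n ⊕ Fin n → ℝ) ≃ₗ[ℝ] _) :
          (Fin n ⊕ Fin n → ℝ) →ₗ[ℝ] _) = Matrix.mulVecLin P := by
        rw [Matrix.toLinearEquiv'_apply]
        apply LinearMap.ext
        intro x
        rw [Matrix.toLin'_apply, Matrix.mulVecLin_apply]
      rw [← hcoe, LinearEquiv.finrank_map_eq]
    · -- rank
      have hinf : W ⊓ (ℝ ∙ v) = ⊥ := by
        rw [eq_bot_iff]
        rintro x ⟨hxW, hxv⟩
        obtain ⟨c, rfl⟩ := Submodule.mem_span_singleton.mp hxv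
        rcases eq_or_ne c 0 with h | h
        · simp [h]
        · exfalso
          apply hvW
          have : v = c⁻¹ • (c • v) := by rw [smul_smul, inv_mul_cancel₀ h, one_smul]
          rw [this]
          exact W.smul_mem _ hxW
      have := Submodule.finrank_sup_add_finrank_inf_eq W (ℝ ∙ v)
      rw [hinf, finrank_bot, finrank_span_singleton hv0, hrank] at this
      omega

end InvariantLagrangianAux

/-- If `P ∈ Sp(2n,ℝ)` has complex spectrum `{1}`, then there is a
`P`-invariant Lagrangian subspace of `ℝ^{2n}`. -/
theorem exists_invariant_lagrangian (n : ℕ)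
    (P : Matrix (Fin n ⊕ Fin n) (Fin n ⊕ Fin n) ℝ)
    (hP : P ∈ Matrix.symplecticGroup (Fin n) ℝ)
    (hspec : spectrum ℂ (P.map (algebraMap ℝ ℂ)) = {1}) :
    ∃ V : Submodule ℝ ((Fin n ⊕ Fin n) → ℝ),
      IsLagrangian n V ∧ V.map (Matrix.mulVecLin P) = V := by
  obtain ⟨W, hiso, hinv, hrank⟩ :=
    InvariantLagrangianAux.grow P hP (InvariantLagrangianAux.isNilpotent_of_spectrum P hspec)
      n le_rfl
  exact ⟨W, ⟨hiso, hrank⟩, hinv⟩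
end

section
/- Every maximal isotropic subspace of ℝ^{2n} that is invariant under a unipotent symplectic matrix P (i.e., an invariant isotropic subspace not strictly contained in any other invariant isotropic subspace) is Lagrangian. -/
open Matrix Polynomial

lemma aux_nilpotent {m : Type*} [Fintype m] [DecidableEq m] (A : Matrix m m ℝ)
    (hspec : spectrum ℂ (A.map (algebraMap ℝ ℂ)) = {1}) : IsNilpotent (A - 1) := by
  set Q := A.map (algebraMap ℝ ℂ) with hQ
  set f : Module.End ℂ (m → ℂ) := Matrix.toLinAlgEquiv' Q with hf
  have hfs : spectrum ℂ f = {1} := by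
    rw [hf, AlgEquiv.spectrum_eq Matrix.toLinAlgEquiv' Q, hspec]
  have hmono : (minpoly ℂ f).Monic := minpoly.monic (Algebra.IsIntegral.isIntegral f)
  have hroots : ∀ μ ∈ (minpoly ℂ f).roots, μ = 1 := by
    intro μ hμ
    have h1 : (minpoly ℂ f).IsRoot μ := (Polynomial.mem_roots'.mp hμ).2
    have h2 : μ ∈ spectrum ℂ f :=
      (Module.End.hasEigenvalue_of_isRoot h1).mem_spectrum
    rw [hfs] at h2
    exact h2
  have hsplit : Splits (minpoly ℂ f) := IsAlgClosed.splits _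
  have hprod := hsplit.eq_prod_roots_of_monic hmono
  have hrepl : (minpoly ℂ f).roots =
      Multiset.replicate (Multiset.card (minpoly ℂ f).roots) 1 :=
    Multiset.eq_replicate_card.mpr hroots
  rw [hrepl, Multiset.map_replicate, Multiset.prod_replicate] at hprod
  have haev : (f - 1) ^ Multiset.card (minpoly ℂ f).roots = 0 := by
    have := minpoly.aeval ℂ f
    rw [hprod] at this
    rw [map_pow, map_sub, aeval_X, aeval_C, _root_.map_one] at this
    exact this
  have hnf : IsNilpotent (f - 1) := ⟨_, haev⟩
  have hQn : IsNilpotent (Q - 1) := by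
    have : Q - 1 = Matrix.toLinAlgEquiv'.symm (f - 1) := by
      simp [hf]
    rw [this]
    exact hnf.map (Matrix.toLinAlgEquiv'.symm : _ ≃ₐ[ℂ] _)
  have hmap : Q - 1 = (RingHom.mapMatrix (algebraMap ℝ ℂ)) (A - 1) := by
    simp [hQ, RingHom.mapMatrix_apply, Matrix.map_sub]
  rw [hmap] at hQn
  obtain ⟨k, hk⟩ := hQn
  refine ⟨k, ?_⟩
  have h0 : (RingHom.mapMatrix (algebraMap ℝ ℂ)) ((A - 1) ^ k) = 0 := by
    rw [map_pow]; exact hk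
  have hinj : Function.Injective (RingHom.mapMatrix (algebraMap ℝ ℂ) :
      Matrix m m ℝ →+* Matrix m m ℂ) := by
    intro X Y hXY
    exact Matrix.map_injective (algebraMap ℝ ℂ).injective hXY
  exact hinj (by simpa using h0)

/-- A maximal `P`-invariant isotropic subspace for a unipotent symplectic matrix `P`
(i.e. an invariant isotropic subspace not strictly contained in any other invariant
isotropic subspace) is Lagrangian. -/
theorem maximal_invariant_isotropic_is_lagrangian (n : ℕ)
    (P : Matrix (Fin n ⊕ Fin n) (Fin n ⊕ Fin n) ℝ)
    (hP : P ∈ Matrix.symplecticGroup (Fin n) ℝ)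
    (hspec : spectrum ℂ (P.map (algebraMap ℝ ℂ)) = {1})
    (V : Submodule ℝ ((Fin n ⊕ Fin n) → ℝ))
    (hiso : IsIsotropic n V)
    (hinv : V.map (Matrix.mulVecLin P) = V)
    (hmax : ∀ W : Submodule ℝ ((Fin n ⊕ Fin n) → ℝ),
      IsIsotropic n W → W.map (Matrix.mulVecLin P) = W → V ≤ W → W = V) :
    IsLagrangian n V := by
  classical
  set B : LinearMap.BilinForm ℝ ((Fin n ⊕ Fin n) → ℝ) :=
    Matrix.toBilin' (Matrix.J (Fin n) ℝ) with hB
  have hBapp : ∀ u v, B u v = symplForm n u v := fun u v =>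
    Matrix.toBilin'_apply' _ u v
  have halt : B.IsAlt := by
    intro x
    have h1 : B x x = x ⬝ᵥ (Matrix.J (Fin n) ℝ) *ᵥ x := hBapp x x
    have h2 : x ⬝ᵥ (Matrix.J (Fin n) ℝ) *ᵥ x = -(x ⬝ᵥ (Matrix.J (Fin n) ℝ) *ᵥ x) := by
      conv_lhs => rw [dotProduct_mulVec, ← Matrix.mulVec_transpose, Matrix.J_transpose]
      simp [Matrix.neg_mulVec, dotProduct_comm]
    rw [h1]
    linarith [h2]
  have hrefl : B.IsRefl := halt.isRefl
  have hnd : B.Nondegenerate := by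
    refine ⟨fun x hx => ?_, fun x hx => ?_⟩
    · refine (Matrix.nondegenerate_of_det_ne_zero
        ((Matrix.isUnit_det_J (Fin n) ℝ).ne_zero)).eq_zero_of_ortho fun w => ?_
      rw [← Matrix.toBilin'_apply']
      exact hx w
    · refine (Matrix.nondegenerate_of_det_ne_zero
        ((Matrix.isUnit_det_J (Fin n) ℝ).ne_zero)).eq_zero_of_ortho fun w => ?_
      rw [← Matrix.toBilin'_apply']
      exact hrefl _ _ (hx w)
  -- invariance of the form under P
  have hform : ∀ x y, B (P *ᵥ x) (P *ᵥ y) = B x y := by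
    intro x y
    have hJP : Pᵀ * Matrix.J (Fin n) ℝ * P = Matrix.J (Fin n) ℝ :=
      (SymplecticGroup.mem_iff').mp hP
    rw [hBapp, hBapp]
    unfold symplForm
    conv_rhs => rw [← hJP]
    rw [Matrix.mul_assoc, ← Matrix.mulVec_mulVec, dotProduct_mulVec x Pᵀ,
      vecMul_transpose, Matrix.mulVec_mulVec]
  -- P is invertible
  have hPu : IsUnit P := (Matrix.isUnit_iff_isUnit_det P).mpr
    (SymplecticGroup.symplectic_det hP)
  have hPinj : Function.Injective (Matrix.mulVecLin P) := by
    simpa [Matrix.coe_mulVecLin] using Matrix.mulVec_injective_iff_isUnit.mpr hPu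
  -- membership facts for V
  have hVmem : ∀ v ∈ V, P *ᵥ v ∈ V := by
    intro v hv
    rw [← hinv]
    exact Submodule.mem_map_of_mem hv
  have hVsurj : ∀ v ∈ V, ∃ w ∈ V, P *ᵥ w = v := by
    intro v hv
    rw [← hinv] at hv
    obtain ⟨w, hw, hwv⟩ := hv
    exact ⟨w, hw, hwv⟩
  -- the symplectic orthogonal
  set Vp := B.orthogonal V with hVp
  have hVVp : V ≤ Vp := by
    intro x hx
    intro u hu
    rw [hBapp]
    exact hiso u hu x hx
  have hVpP : ∀ x ∈ Vp, P *ᵥ x ∈ Vp := by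
    intro x hx u hu
    obtain ⟨w, hw, hwu⟩ := hVsurj u hu
    rw [← hwu, hform w x]
    exact hx w hw
  -- nilpotency
  obtain ⟨k, hk⟩ := aux_nilpotent P hspec
  set N : Matrix (Fin n ⊕ Fin n) (Fin n ⊕ Fin n) ℝ := P - 1 with hN
  have hNV : ∀ v ∈ V, N *ᵥ v ∈ V := by
    intro v hv
    have : N *ᵥ v = P *ᵥ v - v := by
      simp [hN, Matrix.sub_mulVec]
    rw [this]
    exact Submodule.sub_mem _ (hVmem v hv) hv
  have hNVp : ∀ v ∈ Vp, N *ᵥ v ∈ Vp := by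
    intro v hv
    have : N *ᵥ v = P *ᵥ v - v := by
      simp [hN, Matrix.sub_mulVec]
    rw [this]
    exact Submodule.sub_mem _ (hVpP v hv) hv
  have hNpow : ∀ (j : ℕ) (v : (Fin n ⊕ Fin n) → ℝ), v ∈ Vp → (N ^ j) *ᵥ v ∈ Vp := by
    intro j
    induction j with
    | zero => intro v hv; simpa using hv
    | succ j ih =>
      intro v hv
      have : (N ^ (j + 1)) *ᵥ v = N *ᵥ ((N ^ j) *ᵥ v) := by
        rw [Matrix.mulVec_mulVec, pow_succ']
      rw [this]
      exact hNVp _ (ih v hv)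
  -- key step: Vp ≤ V
  have hkey : Vp ≤ V := by
    by_contra hcon
    rw [SetLike.not_le_iff_exists] at hcon
    obtain ⟨x, hxVp, hxV⟩ := hcon
    have hex : ∃ j : ℕ, (N ^ j) *ᵥ x ∈ V := by
      refine ⟨k, ?_⟩
      rw [hk]
      simp
    set j := Nat.find hex with hj
    have hjmem : (N ^ j) *ᵥ x ∈ V := Nat.find_spec hex
    have hjpos : j ≠ 0 := by
      intro h0
      apply hxV
      have := hjmem
      rw [h0] at this
      simpa using this
    set v := (N ^ (j - 1)) *ᵥ x with hv
    have hvVp : v ∈ Vp := hNpow _ x hxVp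
    have hjlt : j - 1 < j := Nat.sub_lt (Nat.pos_of_ne_zero hjpos) one_pos
    have hvV : v ∉ V := Nat.find_min hex hjlt
    have hNv : N *ᵥ v ∈ V := by
      have hj1 : j - 1 + 1 = j := Nat.succ_pred_eq_of_pos (Nat.pos_of_ne_zero hjpos)
      have : N *ᵥ v = (N ^ j) *ᵥ x := by
        rw [hv, Matrix.mulVec_mulVec, ← pow_succ', hj1]
      rw [this]
      exact hjmem
    -- the larger subspace
    set W := V ⊔ Submodule.span ℝ {v} with hW
    have hvW : v ∈ W := Submodule.mem_sup_right (Submodule.mem_span_singleton_self v)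
    have hVW : V ≤ W := le_sup_left
    -- W is isotropic
    have hWiso : IsIsotropic n W := by
      intro u₁ hu₁ u₂ hu₂
      rw [hW] at hu₁ hu₂
      obtain ⟨w₁, hw₁, z₁, hz₁, rfl⟩ := Submodule.mem_sup.mp hu₁
      obtain ⟨w₂, hw₂, z₂, hz₂, rfl⟩ := Submodule.mem_sup.mp hu₂
      obtain ⟨a, rfl⟩ := Submodule.mem_span_singleton.mp hz₁
      obtain ⟨b, rfl⟩ := Submodule.mem_span_singleton.mp hz₂
      rw [← hBapp]
      have e1 : B w₁ w₂ = 0 := by rw [hBapp]; exact hiso w₁ hw₁ w₂ hw₂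
      have e2 : B w₁ v = 0 := hvVp w₁ hw₁
      have e3 : B v w₂ = 0 := hrefl w₂ v (hvVp w₂ hw₂)
      have e4 : B v v = 0 := halt v
      simp only [map_add, _root_.map_smul, LinearMap.add_apply, LinearMap.smul_apply,
        smul_eq_mul, e1, e2, e3, e4]
      ring
    -- W is invariant
    have hWinv : W.map (Matrix.mulVecLin P) = W := by
      have hle : W.map (Matrix.mulVecLin P) ≤ W := by
        rw [hW, Submodule.map_sup]
        refine sup_le ?_ ?_
        · rw [hinv]; exact le_sup_left
        · rw [Submodule.map_span, Set.image_singleton]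
          rw [Submodule.span_le, Set.singleton_subset_iff]
          have : Matrix.mulVecLin P v = v + N *ᵥ v := by
            simp [Matrix.mulVecLin_apply, hN, Matrix.sub_mulVec]
          rw [this]
          exact Submodule.add_mem _ hvW (hVW hNv)
      have hsurj : Function.Surjective (Matrix.mulVecLin P) := by
        simpa [Matrix.coe_mulVecLin] using Matrix.mulVec_surjective_iff_isUnit.mpr hPu
      have hfr : Module.finrank ℝ (W.map (Matrix.mulVecLin P)) = Module.finrank ℝ W := by
        rw [show Matrix.mulVecLin P =
          (LinearEquiv.ofBijective (Matrix.mulVecLin P) ⟨hPinj, hsurj⟩ :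
            ((Fin n ⊕ Fin n) → ℝ) →ₗ[ℝ] ((Fin n ⊕ Fin n) → ℝ)) from rfl]
        exact LinearEquiv.finrank_map_eq _ W
      exact Submodule.eq_of_le_of_finrank_le hle (le_of_eq hfr.symm)
    have := hmax W hWiso hWinv hVW
    rw [this] at hvW
    exact hvV hvW
  -- conclude
  have hVeq : Vp = V := le_antisymm hkey hVVp
  have htot : Module.finrank ℝ ((Fin n ⊕ Fin n) → ℝ) = 2 * n := by
    simp [Module.finrank_fintype_fun_eq_card, Fintype.card_sum]
    ring
  have hfr := LinearMap.BilinForm.finrank_orthogonal hnd V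
  rw [← hVp, hVeq, htot] at hfr
  have hle : Module.finrank ℝ V ≤ 2 * n := by
    rw [← htot]
    exact Submodule.finrank_le V
  refine ⟨hiso, ?_⟩
  omega
end

section
/- Every unipotent element of Sp(2n,ℝ) lies in the closure of the set of hyperbolic elements of Sp(2n,ℝ). -/
open Matrix Polynomial Module

/-! ### Auxiliary lemmas -/

section SpectrumAux

variable {m p q : Type*} [Fintype m] [DecidableEq m] [Fintype p] [Fintype q]

lemma mem_spectrum_iff_det' {M : Matrix m m ℂ} {z : ℂ} :
    z ∈ spectrum ℂ M ↔ det (z • (1 : Matrix m m ℂ) - M) = 0 := by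
  rw [spectrum.mem_iff, Matrix.isUnit_iff_isUnit_det, isUnit_iff_ne_zero, not_ne_iff,
    Algebra.algebraMap_eq_smul_one]

lemma eval_charpoly' (M : Matrix m m ℂ) (z : ℂ) :
    (M.charpoly).eval z = det (z • (1 : Matrix m m ℂ) - M) := by
  rw [Matrix.charpoly, ← coe_evalRingHom, RingHom.map_det]
  congr 1
  ext i j
  by_cases h : i = j <;>
    simp [h, charmatrix_apply, Matrix.one_apply, Matrix.diagonal_apply, Matrix.smul_apply,
      Matrix.sub_apply]

lemma pow_card_eq_zero_of_spectrum_one {M : Matrix m m ℂ}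
    (h : spectrum ℂ M = {1}) :
    (M - 1) ^ (Fintype.card m) = 0 := by
  have hm : M.charpoly.Monic := Matrix.charpoly_monic M
  have hdeg : M.charpoly.natDegree = Fintype.card m := Matrix.charpoly_natDegree_eq_dim M
  have hsplit : M.charpoly.Splits := IsAlgClosed.splits _
  have hroots : M.charpoly.roots = Multiset.replicate (Fintype.card m) 1 := by
    rw [Multiset.eq_replicate]
    constructor
    · rw [← hdeg]
      exact (Polynomial.splits_iff_card_roots).mp hsplit
    · intro z hz
      have hz' : z ∈ spectrum ℂ M := by
        rw [mem_spectrum_iff_det', ← eval_charpoly']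
        exact Polynomial.isRoot_of_mem_roots hz
      rw [h] at hz'
      exact hz'
  have hch : M.charpoly = (X - C 1) ^ (Fintype.card m) := by
    conv_lhs => rw [hsplit.eq_prod_roots_of_monic hm]
    rw [hroots]
    simp [Multiset.map_replicate, Multiset.prod_replicate]
  have := Matrix.aeval_self_charpoly M
  rw [hch] at this
  simpa [sub_eq_iff_eq_add, _root_.map_pow, _root_.map_sub, aeval_X, aeval_C] using this

lemma tri_apply (X : Matrix p m ℝ) (Mm : Matrix m m ℝ) (Y : Matrix q m ℝ) (i : p) (j : q) :
    (X * Mm * Yᵀ) i j = X i ⬝ᵥ (Mm *ᵥ Y j) := by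
  simp only [Matrix.mul_apply, Matrix.transpose_apply, Matrix.mulVec, dotProduct,
    Finset.sum_mul, Finset.mul_sum]
  rw [Finset.sum_comm]
  apply Finset.sum_congr rfl
  intro a _
  apply Finset.sum_congr rfl
  intro b _
  ring

lemma mulVecLin_pow (A : Matrix m m ℝ) (k : ℕ) :
    (Matrix.mulVecLin A) ^ k = Matrix.mulVecLin (A ^ k) := by
  induction k with
  | zero =>
      rw [pow_zero, pow_zero, Matrix.mulVecLin_one]
      rfl
  | succ k ih =>
      rw [pow_succ, pow_succ, ih, Module.End.mul_eq_comp]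
      ext v
      simp [Matrix.mulVecLin_apply, Matrix.mulVec_mulVec]

lemma spectrum_eq_of_conj {X Y G : Matrix m m ℝ}
    (hG : IsUnit G.det) (h : G * X = Y * G) :
    spectrum ℂ (X.map (algebraMap ℝ ℂ)) = spectrum ℂ (Y.map (algebraMap ℝ ℂ)) := by
  have hGc : det (G.map (algebraMap ℝ ℂ)) ≠ 0 := by
    rw [show G.map ⇑(algebraMap ℝ ℂ) = (algebraMap ℝ ℂ).mapMatrix G from rfl,
      ← RingHom.map_det]
    simpa using ((algebraMap ℝ ℂ).isUnit_map hG).ne_zero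
  ext z
  rw [mem_spectrum_iff_det', mem_spectrum_iff_det']
  have key : G.map (algebraMap ℝ ℂ) * (z • 1 - X.map (algebraMap ℝ ℂ)) =
      (z • 1 - Y.map (algebraMap ℝ ℂ)) * G.map (algebraMap ℝ ℂ) := by
    rw [Matrix.mul_sub, Matrix.sub_mul, Matrix.mul_smul, Matrix.smul_mul, Matrix.mul_one,
      Matrix.one_mul, ← Matrix.map_mul, ← Matrix.map_mul, h]
  have hdet := congrArg det key
  rw [det_mul, det_mul] at hdet
  constructor
  · intro h0
    have h1 : det (G.map (algebraMap ℝ ℂ)) * det (z • 1 - X.map (algebraMap ℝ ℂ)) = 0 := by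
      rw [h0, mul_zero]
    rw [hdet] at h1
    rcases mul_eq_zero.mp h1 with h' | h'
    · exact h'
    · exact absurd h' hGc
  · intro h0
    have h1 : det (z • 1 - Y.map (algebraMap ℝ ℂ)) * det (G.map (algebraMap ℝ ℂ)) = 0 := by
      rw [h0, zero_mul]
    rw [← hdet] at h1
    rcases mul_eq_zero.mp h1 with h' | h'
    · exact absurd h' hGc
    · exact h'

end SpectrumAux

section Isotropic

variable {V : Type*} [AddCommGroup V] [Module ℝ V] [FiniteDimensional ℝ V]

omit [FiniteDimensional ℝ V] in
lemma map_pow_le_of_map_le {p : Submodule ℝ V} {g : Module.End ℝ V} (h : p.map g ≤ p) (i : ℕ) :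
    p.map (g ^ i) ≤ p := by
  induction i with
  | zero => rw [pow_zero, Module.End.one_eq_id, Submodule.map_id]
  | succ i ih =>
      rw [pow_succ, Module.End.mul_eq_comp, Submodule.map_comp]
      exact le_trans (Submodule.map_mono h) ih

lemma exists_isotropic_invariant
    (B : LinearMap.BilinForm ℝ V) (hBalt : B.IsAlt) (hBnd : B.Nondegenerate)
    (f : Module.End ℝ V) (hf : ∀ x y, B (f x) (f y) = B x y) (hfu : Function.Injective f)
    (hnil : IsNilpotent ((f : Module.End ℝ V) - 1)) :
    ∀ k : ℕ, 2 * k ≤ finrank ℝ V →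
      ∃ L : Submodule ℝ V, (∀ x ∈ L, ∀ y ∈ L, B x y = 0) ∧ L.map f ≤ L ∧ finrank ℝ L = k := by
  have hBrefl : B.IsRefl := hBalt.isRefl
  intro k
  induction k with
  | zero => exact fun _ => ⟨⊥, by simp, by simp, finrank_bot ℝ V⟩
  | succ k ih =>
      intro hk
      obtain ⟨L, hLiso, hLinv, hLrank⟩ := ih (by omega)
      -- f maps L onto L
      have hfLeq : L.map f = L := by
        apply Submodule.eq_of_le_of_finrank_le hLinv
        have hsurj : Function.Surjective f := (LinearMap.injective_iff_surjective.mp hfu)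
        have : Submodule.map f L =
            Submodule.map ((LinearEquiv.ofBijective f ⟨hfu, hsurj⟩ : V ≃ₗ[ℝ] V) :
              V →ₗ[ℝ] V) L := rfl
        rw [this, LinearEquiv.finrank_map_eq]
      -- the orthogonal complement
      set Lp := B.orthogonal L with hLp
      have hLpRank : finrank ℝ Lp = finrank ℝ V - k := by
        rw [hLp, LinearMap.BilinForm.finrank_orthogonal hBnd, hLrank]
      have hLleLp : L ≤ Lp := by
        intro x hx
        exact fun y hy => hLiso y hy x hx
      -- f preserves Lp
      have hfLp : Lp.map f ≤ Lp := by
        rintro _ ⟨x, hx, rfl⟩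
        intro y hy
        obtain ⟨y', hy', rfl⟩ : ∃ y' ∈ L, f y' = y := by
          rw [← hfLeq] at hy; exact ⟨_, hy.choose_spec.1, hy.choose_spec.2⟩
        show B (f y') (f x) = 0
        rw [hf]
        exact hx y' hy'
      -- the nilpotent part
      set N : Module.End ℝ V := f - 1 with hNdef
      have hNL : L.map N ≤ L := by
        rintro _ ⟨x, hx, rfl⟩
        simpa [hNdef] using Submodule.sub_mem L (hLinv ⟨x, hx, rfl⟩) hx
      have hNLp : Lp.map N ≤ Lp := by
        rintro _ ⟨x, hx, rfl⟩
        simpa [hNdef] using Submodule.sub_mem Lp (hfLp ⟨x, hx, rfl⟩) hx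
      -- find minimal j with N^j Lp ≤ L
      have hex : ∃ j, Lp.map (N ^ j) ≤ L := by
        obtain ⟨jm, hjm⟩ := hnil
        refine ⟨jm, ?_⟩
        rw [hjm, Submodule.map_zero]
        exact bot_le
      classical
      let j := Nat.find hex
      have hjspec : Lp.map (N ^ j) ≤ L := Nat.find_spec hex
      have hLpneL : ¬ Lp ≤ L := by
        intro hle
        have h1 : finrank ℝ Lp ≤ finrank ℝ L := Submodule.finrank_mono hle
        have h2 : finrank ℝ L ≤ finrank ℝ V := Submodule.finrank_le L
        omega
      have hjne : j ≠ 0 := by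
        intro h0
        apply hLpneL
        have := hjspec
        rw [h0, pow_zero, Module.End.one_eq_id, Submodule.map_id] at this
        exact this
      have hjmin : ¬ Lp.map (N ^ (j - 1)) ≤ L := Nat.find_min hex (by omega)
      obtain ⟨v, hvLp', hvnL⟩ : ∃ v, v ∈ Lp.map (N ^ (j - 1)) ∧ v ∉ L := by
        by_contra hcon
        push_neg at hcon
        exact hjmin hcon
      have hvLp : v ∈ Lp := map_pow_le_of_map_le hNLp (j - 1) hvLp'
      have hNvL : N v ∈ L := by
        apply hjspec
        obtain ⟨w, hw, rfl⟩ := hvLp'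
        refine ⟨w, hw, ?_⟩
        have : N ^ j = N * N ^ (j - 1) := by
          conv_lhs => rw [show j = (j - 1) + 1 by omega]
          rw [pow_succ']
        rw [this]
        rfl
      have hvne : v ≠ 0 := fun h => hvnL (h ▸ L.zero_mem)
      have hBav : ∀ a ∈ L, B a v = 0 := fun a ha => hvLp a ha
      refine ⟨L ⊔ (ℝ ∙ v), ?_, ?_, ?_⟩
      · -- isotropic
        intro x hx y hy
        rcases Submodule.mem_sup.mp hx with ⟨a, ha, b, hb, rfl⟩
        rcases Submodule.mem_span_singleton.mp hb with ⟨c, rfl⟩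
        rcases Submodule.mem_sup.mp hy with ⟨a', ha', b', hb', rfl⟩
        rcases Submodule.mem_span_singleton.mp hb' with ⟨c', rfl⟩
        have h1 : B a a' = 0 := hLiso a ha a' ha'
        have h2 : B a v = 0 := hBav a ha
        have h4 : B v a' = 0 := hBrefl a' v (hBav a' ha')
        have h5 : B v v = 0 := hBalt.self_eq_zero v
        simp [_root_.map_add, _root_.map_smul, LinearMap.add_apply, LinearMap.smul_apply, h1, h2, h4, h5]
      · -- invariant
        rintro _ ⟨x, hx, rfl⟩
        rcases Submodule.mem_sup.mp hx with ⟨a, ha, b, hb, rfl⟩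
        rcases Submodule.mem_span_singleton.mp hb with ⟨c, rfl⟩
        have hfv : f v = v + N v := by
          simp only [hNdef, LinearMap.sub_apply, Module.End.one_apply]
          abel
        rw [_root_.map_add, _root_.map_smul, hfv]
        refine Submodule.add_mem _ (Submodule.mem_sup_left (hLinv ⟨a, ha, rfl⟩)) ?_
        rw [smul_add]
        refine Submodule.add_mem _
          (Submodule.mem_sup_right (Submodule.smul_mem _ _ (Submodule.mem_span_singleton_self v)))
          (Submodule.mem_sup_left (Submodule.smul_mem _ _ hNvL))
      · -- rank
        have hlt : L < L ⊔ (ℝ ∙ v) :=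
          lt_of_le_of_ne le_sup_left (fun h => hvnL
            (h ▸ Submodule.mem_sup_right (Submodule.mem_span_singleton_self v)))
        have h1 : k < finrank ℝ (L ⊔ (ℝ ∙ v) : Submodule ℝ V) := by
          rw [← hLrank]
          exact Submodule.finrank_lt_finrank_of_lt hlt
        have h2 : finrank ℝ (L ⊔ (ℝ ∙ v) : Submodule ℝ V) ≤ k + 1 := by
          have h0 := Submodule.finrank_sup_add_finrank_inf_eq L (ℝ ∙ v)
          have h3 : finrank ℝ (ℝ ∙ v : Submodule ℝ V) = 1 := finrank_span_singleton hvne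
          omega
        omega

end Isotropic

set_option maxHeartbeats 1600000 in
/-- Every unipotent element of `Sp(2n,ℝ)` (complex spectrum `{1}`) lies in the closure
of the set of hyperbolic elements of `Sp(2n,ℝ)` (complex spectrum disjoint from the
unit circle), the closure being taken in the space of `2n × 2n` real matrices. -/
theorem unipotent_mem_closure_hyperbolic (n : ℕ)
    (P : Matrix (Fin n ⊕ Fin n) (Fin n ⊕ Fin n) ℝ)
    (hP : P ∈ Matrix.symplecticGroup (Fin n) ℝ)
    (hspec : spectrum ℂ (P.map (algebraMap ℝ ℂ)) = {1}) :
    P ∈ closure {Q : Matrix (Fin n ⊕ Fin n) (Fin n ⊕ Fin n) ℝ |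
      Q ∈ Matrix.symplecticGroup (Fin n) ℝ ∧
      ∀ z ∈ spectrum ℂ (Q.map (algebraMap ℝ ℂ)), ‖z‖ ≠ 1} := by
  classical
  set Jm : Matrix (Fin n ⊕ Fin n) (Fin n ⊕ Fin n) ℝ := Matrix.J (Fin n) ℝ with hJm
  set B : LinearMap.BilinForm ℝ ((Fin n ⊕ Fin n) → ℝ) := Matrix.toBilin' Jm with hBdef
  have hB_apply : ∀ x y, B x y = x ⬝ᵥ (Jm *ᵥ y) := fun x y => Matrix.toBilin'_apply' _ _ _
  have hJdet : det Jm ≠ 0 := (Matrix.isUnit_det_J (Fin n) ℝ).ne_zero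
  have hBnd : B.Nondegenerate := by
    rw [hBdef, Matrix.nondegenerate_toBilin'_iff]
    exact Matrix.nondegenerate_of_det_ne_zero hJdet
  have hBalt : B.IsAlt := by
    intro x
    rw [hB_apply]
    have h1 : x ⬝ᵥ (Jm *ᵥ x) = (x ᵥ* Jm) ⬝ᵥ x := dotProduct_mulVec x Jm x
    have h2 := vecMul_transpose Jmᵀ x
    rw [transpose_transpose] at h2
    have h3 : Jmᵀ = -Jm := by rw [hJm, Matrix.J_transpose]
    rw [h2, h3, Matrix.neg_mulVec, neg_dotProduct] at h1
    have h4 : x ⬝ᵥ Jm *ᵥ x = Jm *ᵥ x ⬝ᵥ x := dotProduct_comm _ _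
    linarith
  have hBrefl : B.IsRefl := hBalt.isRefl
  -- symplecticity of P as form preservation
  have hPJP : Pᵀ * Jm * P = Jm := SymplecticGroup.mem_iff'.mp hP
  have hsymp : ∀ x y, B (P *ᵥ x) (P *ᵥ y) = B x y := by
    intro x y
    rw [hB_apply, hB_apply, mulVec_mulVec, dotProduct_mulVec, vecMul_mulVec,
      ← Matrix.mul_assoc, hPJP, ← dotProduct_mulVec]
  have hPdet : IsUnit P.det := SymplecticGroup.symplectic_det hP
  -- nilpotency of P - 1
  have hnilmat : (P - 1) ^ (Fintype.card (Fin n ⊕ Fin n)) = 0 := by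
    have h1 : ((P.map (algebraMap ℝ ℂ)) - 1) ^ (Fintype.card (Fin n ⊕ Fin n)) = 0 :=
      pow_card_eq_zero_of_spectrum_one hspec
    have hinj : Function.Injective ((algebraMap ℝ ℂ).mapMatrix :
        Matrix (Fin n ⊕ Fin n) (Fin n ⊕ Fin n) ℝ → Matrix (Fin n ⊕ Fin n) (Fin n ⊕ Fin n) ℂ) := by
      intro X Y hXY
      ext i j
      have := congrArg (fun M => M i j) hXY
      simpa [RingHom.mapMatrix_apply, Matrix.map_apply] using
        (algebraMap ℝ ℂ).injective this
    apply hinj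
    rw [_root_.map_pow, _root_.map_sub, _root_.map_one, _root_.map_zero]
    exact h1
  set f : Module.End ℝ ((Fin n ⊕ Fin n) → ℝ) := Matrix.mulVecLin P with hfdef
  have hf_apply : ∀ x, f x = P *ᵥ x := fun x => rfl
  have hfu : Function.Injective f := by
    rw [hfdef]
    exact Matrix.mulVec_injective_iff_isUnit.mpr ((Matrix.isUnit_iff_isUnit_det P).mpr hPdet)
  have hfsub : f - 1 = (P - 1).mulVecLin := by
    ext v
    simp [hfdef, Matrix.mulVecLin_apply, Matrix.sub_mulVec, Matrix.one_mulVec,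
      Pi.single_apply, Matrix.one_apply, eq_comm]
  have hnil : IsNilpotent (f - 1) := by
    refine ⟨Fintype.card (Fin n ⊕ Fin n), ?_⟩
    rw [hfsub, mulVecLin_pow, hnilmat, Matrix.mulVecLin_zero]
  have hcard : Fintype.card (Fin n ⊕ Fin n) = 2 * n := by
    simp [Fintype.card_sum, two_mul]
  have hdim : finrank ℝ ((Fin n ⊕ Fin n) → ℝ) = 2 * n := by
    rw [Module.finrank_pi, hcard]
  -- the invariant Lagrangian
  obtain ⟨L, hLiso, hLinv, hLrank⟩ :=
    exists_isotropic_invariant B hBalt hBnd f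
      (fun x y => by rw [hf_apply, hf_apply]; exact hsymp x y) hfu hnil n (by omega)
  -- basis of L
  let bL : Basis (Fin n) ℝ L := Module.finBasisOfFinrankEq ℝ L hLrank
  set u : Fin n → ((Fin n ⊕ Fin n) → ℝ) := fun i => (bL i : (Fin n ⊕ Fin n) → ℝ) with hudef
  have hujL : ∀ j, u j ∈ L := fun j => (bL j).2
  have hLspan : Submodule.span ℝ (Set.range u) = L := by
    have h1 := bL.span_eq
    have h2 : L.subtype '' (Set.range bL) = Set.range u := by
      rw [← Set.range_comp]
      rfl
    calc Submodule.span ℝ (Set.range u) = Submodule.span ℝ (L.subtype '' Set.range bL) := by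
          rw [h2]
      _ = Submodule.map L.subtype (Submodule.span ℝ (Set.range bL)) :=
          (Submodule.map_span _ _).symm
      _ = Submodule.map L.subtype ⊤ := by rw [h1]
      _ = L := Submodule.map_subtype_top L
  have hPuL : ∀ j, P *ᵥ u j ∈ L := fun j => hLinv ⟨u j, hujL j, rfl⟩
  -- the dual family
  set Ψ : ((Fin n ⊕ Fin n) → ℝ) →ₗ[ℝ] (Fin n → ℝ) := LinearMap.pi (fun j => B (u j)) with hΨdef
  have hΨ_apply : ∀ x j, Ψ x j = B (u j) x := fun x j => rfl
  have hkerΨ : LinearMap.ker Ψ = B.orthogonal L := by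
    ext x
    simp only [LinearMap.mem_ker, LinearMap.BilinForm.mem_orthogonal_iff]
    constructor
    · intro hx y hy
      rw [← hLspan] at hy
      refine Submodule.span_induction ?_ ?_ ?_ ?_ hy
      · rintro y ⟨j, rfl⟩
        show B (u j) x = 0
        have := congrFun hx j
        rwa [hΨ_apply] at this
      · show B 0 x = 0
        rw [_root_.map_zero]
        rfl
      · intro a b _ _ ha hb
        show B (a + b) x = 0
        rw [_root_.map_add, LinearMap.add_apply, ha, hb, add_zero]
      · intro c a _ ha
        show B (c • a) x = 0
        rw [_root_.map_smul, LinearMap.smul_apply, ha, smul_zero]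
    · intro hx
      ext j
      rw [hΨ_apply]
      exact hx (u j) (hujL j)
  have hΨsurj : Function.Surjective Ψ := by
    rw [← LinearMap.range_eq_top]
    apply Submodule.eq_top_of_finrank_eq
    have hrn := LinearMap.finrank_range_add_finrank_ker Ψ
    have hker : finrank ℝ (LinearMap.ker Ψ) = n := by
      rw [hkerΨ, LinearMap.BilinForm.finrank_orthogonal hBnd, hLrank, hdim]
      omega
    have hfr : finrank ℝ (Fin n → ℝ) = n := by simp
    omega
  set w' : Fin n → ((Fin n ⊕ Fin n) → ℝ) :=
    fun i => Classical.choose (hΨsurj (-(Pi.single i (1 : ℝ)))) with hw'def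
  have hw' : ∀ i j, B (u j) (w' i) = -(if j = i then (1 : ℝ) else 0) := by
    intro i j
    have hspec' := Classical.choose_spec (hΨsurj (-(Pi.single i (1 : ℝ))))
    have := congrFun hspec' j
    rw [hΨ_apply] at this
    rw [this]
    simp [Pi.single_apply]
  -- skew matrix S and corrected dual family w
  set S : Matrix (Fin n) (Fin n) ℝ := Matrix.of (fun i j => B (w' i) (w' j)) with hSdef
  have hS_apply : ∀ i j, S i j = B (w' i) (w' j) := fun i j => rfl
  have hSskew : ∀ i j, S j i = -S i j := by
    intro i j
    rw [hS_apply, hS_apply]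
    have h := LinearMap.IsAlt.neg hBalt (w' i) (w' j)
    linarith [h]
  set w : Fin n → ((Fin n ⊕ Fin n) → ℝ) :=
    fun i => w' i + (1/2 : ℝ) • (∑ k, S i k • u k) with hwdef
  have hBuu : ∀ i j, B (u i) (u j) = 0 := fun i j => hLiso (u i) (hujL i) (u j) (hujL j)
  have hBw'u : ∀ i j, B (w' i) (u j) = if i = j then (1 : ℝ) else 0 := by
    intro i j
    have h := LinearMap.IsAlt.neg hBalt (u j) (w' i)
    rw [hw' i j] at h
    have h2 : B (w' i) (u j) = if j = i then (1:ℝ) else 0 := by linarith [h]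
    rw [h2]
    by_cases hij : i = j <;> simp [hij, eq_comm]
  -- expansion helpers
  have hsumr : ∀ (x : (Fin n ⊕ Fin n) → ℝ) (cv : Fin n → ℝ),
      B x (∑ k, cv k • u k) = ∑ k, cv k * B x (u k) := by
    intro x cv
    rw [_root_.map_sum]
    exact Finset.sum_congr rfl fun k _ => by rw [_root_.map_smul, smul_eq_mul]
  have hsuml : ∀ (y : (Fin n ⊕ Fin n) → ℝ) (cv : Fin n → ℝ),
      B (∑ k, cv k • u k) y = ∑ k, cv k * B (u k) y := by
    intro y cv
    rw [_root_.map_sum, LinearMap.sum_apply]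
    exact Finset.sum_congr rfl fun k _ => by rw [_root_.map_smul, LinearMap.smul_apply, smul_eq_mul]
  have hBr : ∀ (x : (Fin n ⊕ Fin n) → ℝ) (j : Fin n),
      B x (w j) = B x (w' j) + (1/2 : ℝ) * (∑ k, S j k * B x (u k)) := by
    intro x j
    rw [hwdef]
    rw [_root_.map_add, _root_.map_smul, smul_eq_mul, hsumr]
  have hBl : ∀ (y : (Fin n ⊕ Fin n) → ℝ) (i : Fin n),
      B (w i) y = B (w' i) y + (1/2 : ℝ) * (∑ k, S i k * B (u k) y) := by
    intro y i
    rw [hwdef]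
    rw [_root_.map_add, LinearMap.add_apply, _root_.map_smul, LinearMap.smul_apply,
      smul_eq_mul, hsuml]
  have hBuw : ∀ i j, B (u i) (w j) = -(if i = j then (1 : ℝ) else 0) := by
    intro i j
    rw [hBr, hw' j i]
    have hz : (∑ k, S j k * B (u i) (u k)) = 0 :=
      Finset.sum_eq_zero fun k _ => by rw [hBuu, mul_zero]
    rw [hz, mul_zero, add_zero]
  have hBwu : ∀ i j, B (w i) (u j) = if i = j then (1 : ℝ) else 0 := by
    intro i j
    rw [hBl, hBw'u]
    have hz : (∑ k, S i k * B (u k) (u j)) = 0 :=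
      Finset.sum_eq_zero fun k _ => by rw [hBuu, mul_zero]
    rw [hz, mul_zero, add_zero]
  have hBww : ∀ i j, B (w i) (w j) = 0 := by
    intro i j
    rw [hBl]
    have e1 : B (w' i) (w j) = S i j + (1/2 : ℝ) * S j i := by
      rw [hBr, ← hS_apply]
      congr 1
      congr 1
      have : ∀ k ∈ Finset.univ, S j k * B (w' i) (u k) = if i = k then S j k else 0 := by
        intro k _
        rw [hBw'u]
        by_cases h : i = k <;> simp [h]
      rw [Finset.sum_congr rfl this]
      simp
    have e2 : (∑ k, S i k * B (u k) (w j)) = -(S i j) := by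
      have : ∀ k ∈ Finset.univ, S i k * B (u k) (w j) = if k = j then -(S i k) else 0 := by
        intro k _
        rw [hBuw]
        by_cases h : k = j <;> simp [h]
      rw [Finset.sum_congr rfl this]
      simp
    rw [e1, e2, hSskew i j]
    ring
  -- the symplectic basis-change matrix
  set g : Matrix (Fin n ⊕ Fin n) (Fin n ⊕ Fin n) ℝ := Matrix.of (Sum.elim u w) with hgdef
  have hJblocks : Jm = Matrix.fromBlocks 0 (-1) 1 0 := by rw [hJm]; rfl
  have hgJg : g * Jm * gᵀ = Jm := by
    have key : ∀ x y, g x ⬝ᵥ (Jm *ᵥ g y) = Jm x y := by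
      intro x y
      cases x with
      | inl i =>
        cases y with
        | inl j =>
            show u i ⬝ᵥ (Jm *ᵥ u j) = Jm (Sum.inl i) (Sum.inl j)
            rw [← hB_apply, hBuu, hJblocks]
            simp [Matrix.fromBlocks_apply₁₁]
        | inr j =>
            show u i ⬝ᵥ (Jm *ᵥ w j) = Jm (Sum.inl i) (Sum.inr j)
            rw [← hB_apply, hBuw, hJblocks]
            simp [Matrix.fromBlocks_apply₁₂, Matrix.one_apply]
      | inr i =>
        cases y with
        | inl j =>
            show w i ⬝ᵥ (Jm *ᵥ u j) = Jm (Sum.inr i) (Sum.inl j)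
            rw [← hB_apply, hBwu, hJblocks]
            simp [Matrix.fromBlocks_apply₂₁, Matrix.one_apply]
        | inr j =>
            show w i ⬝ᵥ (Jm *ᵥ w j) = Jm (Sum.inr i) (Sum.inr j)
            rw [← hB_apply, hBww, hJblocks]
            simp [Matrix.fromBlocks_apply₂₂]
    ext x y
    rw [tri_apply]
    exact key x y
  have hg : g ∈ Matrix.symplecticGroup (Fin n) ℝ := by
    rw [SymplecticGroup.mem_iff, ← hJm]
    exact hgJg
  have hgT : gᵀ ∈ Matrix.symplecticGroup (Fin n) ℝ := SymplecticGroup.transpose_mem hg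
  have hdetg : IsUnit g.det := SymplecticGroup.symplectic_det hg
  set Gm : Matrix (Fin n ⊕ Fin n) (Fin n ⊕ Fin n) ℝ := gᵀ with hGm
  have hdeth : IsUnit Gm.det := by rw [hGm, Matrix.det_transpose]; exact hdetg
  have hGinv : Gm * Gm⁻¹ = 1 := Matrix.mul_nonsing_inv _ hdeth
  have hGinv' : Gm⁻¹ * Gm = 1 := Matrix.nonsing_inv_mul _ hdeth
  set M : Matrix (Fin n ⊕ Fin n) (Fin n ⊕ Fin n) ℝ := Gm⁻¹ * P * Gm with hMdef
  have hGM : Gm * M = P * Gm := by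
    rw [hMdef, ← Matrix.mul_assoc, ← Matrix.mul_assoc, hGinv, Matrix.one_mul]
  -- lower-left block of M vanishes
  have hM21 : ∀ i j, M (Sum.inr i) (Sum.inl j) = 0 := by
    intro i j
    have hmem : (P *ᵥ u j) ∈ Submodule.span ℝ (Set.range u) := by
      rw [hLspan]; exact hPuL j
    obtain ⟨c, hc⟩ := Submodule.mem_span_range_iff_exists_fun ℝ |>.mp hmem
    have hx1 : Gm *ᵥ (Sum.elim c 0) = P *ᵥ u j := by
      rw [← hc]
      ext y
      simp only [Matrix.mulVec, dotProduct, Fintype.sum_sum_type, hGm,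
        Matrix.transpose_apply, Finset.sum_apply, Pi.smul_apply, smul_eq_mul,
        Sum.elim_inl, Sum.elim_inr, Pi.zero_apply, mul_zero, Finset.sum_const_zero, add_zero]
      apply Finset.sum_congr rfl
      intro k _
      show g (Sum.inl k) y * c k = c k * u k y
      rw [show g (Sum.inl k) y = u k y from rfl]
      ring
    have hx2 : Gm *ᵥ (fun x' => M x' (Sum.inl j)) = P *ᵥ u j := by
      ext y
      calc (Gm *ᵥ (fun x' => M x' (Sum.inl j))) y = (Gm * M) y (Sum.inl j) := by
            rw [Matrix.mul_apply]
            rfl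
        _ = (P * Gm) y (Sum.inl j) := by rw [hGM]
        _ = (P *ᵥ u j) y := by
            rw [Matrix.mul_apply]
            apply Finset.sum_congr rfl
            intro x _
            show P y x * Gm x (Sum.inl j) = P y x * u j x
            rw [show Gm x (Sum.inl j) = u j x from rfl]
    have hinjG : Function.Injective (Gm.mulVec) :=
      Matrix.mulVec_injective_iff_isUnit.mpr ((Matrix.isUnit_iff_isUnit_det Gm).mpr hdeth)
    have hcols := hinjG (hx2.trans hx1.symm)
    have := congrFun hcols (Sum.inr i)
    simpa using this
  set Ab := M.toBlocks₁₁ with hAb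
  set Cb := M.toBlocks₁₂ with hCb
  set Bb := M.toBlocks₂₂ with hBb
  have hM21' : M.toBlocks₂₁ = 0 := by
    ext i j
    simpa [Matrix.toBlocks₂₁] using hM21 i j
  have hMblocks : M = Matrix.fromBlocks Ab Cb 0 Bb := by
    conv_lhs => rw [← Matrix.fromBlocks_toBlocks M]
    rw [hM21']
  have hspecM : spectrum ℂ (M.map (algebraMap ℝ ℂ)) = {1} := by
    rw [spectrum_eq_of_conj hdeth hGM]
    exact hspec
  -- complexified blocks
  have hmapsmul : ∀ (c : ℝ) (X : Matrix (Fin n) (Fin n) ℝ),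
      (c • X).map (algebraMap ℝ ℂ) = (c : ℂ) • X.map (algebraMap ℝ ℂ) := by
    intro c X
    ext i j
    simp [Matrix.map_apply, Matrix.smul_apply, smul_eq_mul]
  have hMc : M.map (algebraMap ℝ ℂ) = Matrix.fromBlocks (Ab.map (algebraMap ℝ ℂ))
      (Cb.map (algebraMap ℝ ℂ)) 0 (Bb.map (algebraMap ℝ ℂ)) := by
    conv_lhs => rw [hMblocks]
    rw [Matrix.fromBlocks_map, Matrix.map_zero _ (_root_.map_zero _)]
  have hsplitB : ∀ (X Y Z : Matrix (Fin n) (Fin n) ℂ) (z : ℂ),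
      (z • (1 : Matrix (Fin n ⊕ Fin n) (Fin n ⊕ Fin n) ℂ) - Matrix.fromBlocks X Y 0 Z) =
        Matrix.fromBlocks (z • 1 - X) (-Y) 0 (z • 1 - Z) := by
    intro X Y Z z
    rw [← Matrix.fromBlocks_one, Matrix.fromBlocks_smul, sub_eq_add_neg, Matrix.fromBlocks_neg,
      Matrix.fromBlocks_add]
    congr 1 <;> simp [sub_eq_add_neg]
  -- the key family
  have hkey : ∀ t : ℝ, 1 < t →
      (Gm * Matrix.fromBlocks (t • (1 : Matrix (Fin n) (Fin n) ℝ)) 0 0 (t⁻¹ • 1) * Gm⁻¹ * P) ∈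
        {Q : Matrix (Fin n ⊕ Fin n) (Fin n ⊕ Fin n) ℝ |
          Q ∈ Matrix.symplecticGroup (Fin n) ℝ ∧
          ∀ z ∈ spectrum ℂ (Q.map (algebraMap ℝ ℂ)), ‖z‖ ≠ 1} := by
    intro t ht
    have ht0 : (0 : ℝ) < t := by linarith
    have ht0' : t ≠ 0 := ne_of_gt ht0
    set Dt : Matrix (Fin n ⊕ Fin n) (Fin n ⊕ Fin n) ℝ :=
      Matrix.fromBlocks (t • 1) 0 0 (t⁻¹ • 1) with hDt
    have hDtT : Dtᵀ = Dt := by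
      rw [hDt, Matrix.fromBlocks_transpose]
      simp
    have hDtSp : Dt ∈ Matrix.symplecticGroup (Fin n) ℝ := by
      rw [SymplecticGroup.mem_iff, hDtT, hDt, Matrix.J, Matrix.fromBlocks_multiply,
        Matrix.fromBlocks_multiply]
      simp [Matrix.smul_mul, Matrix.mul_smul, smul_smul, mul_inv_cancel₀ ht0',
        inv_mul_cancel₀ ht0']
    have hGminvmem : Gm⁻¹ ∈ Matrix.symplecticGroup (Fin n) ℝ := by
      rw [SymplecticGroup.inv_eq_symplectic_inv Gm hgT]
      exact mul_mem (mul_mem (SymplecticGroup.neg_mem (SymplecticGroup.J_mem _ _))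
        (SymplecticGroup.transpose_mem hgT)) (SymplecticGroup.J_mem _ _)
    set Q : Matrix (Fin n ⊕ Fin n) (Fin n ⊕ Fin n) ℝ := Gm * Dt * Gm⁻¹ * P with hQ
    have hQmem : Q ∈ Matrix.symplecticGroup (Fin n) ℝ :=
      mul_mem (mul_mem (mul_mem hgT hDtSp) hGminvmem) hP
    have hQG : Gm * (Dt * M) = Q * Gm := by
      rw [hQ, Matrix.mul_assoc (Gm * Dt * Gm⁻¹) P Gm, ← hGM,
        Matrix.mul_assoc (Gm * Dt) Gm⁻¹ (Gm * M), ← Matrix.mul_assoc Gm⁻¹ Gm M, hGinv',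
        Matrix.one_mul, Matrix.mul_assoc]
    have hspecQ : spectrum ℂ (Q.map (algebraMap ℝ ℂ)) =
        spectrum ℂ ((Dt * M).map (algebraMap ℝ ℂ)) :=
      (spectrum_eq_of_conj hdeth hQG).symm
    have hDtM : Dt * M = Matrix.fromBlocks (t • Ab) (t • Cb) 0 (t⁻¹ • Bb) := by
      conv_lhs => rw [hMblocks, hDt]
      rw [Matrix.fromBlocks_multiply]
      simp [Matrix.smul_mul]
    have hDtMc : (Dt * M).map (algebraMap ℝ ℂ) =
        Matrix.fromBlocks ((t : ℂ) • Ab.map (algebraMap ℝ ℂ)) ((t : ℂ) • Cb.map (algebraMap ℝ ℂ))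
          0 (((t : ℂ))⁻¹ • Bb.map (algebraMap ℝ ℂ)) := by
      rw [hDtM, Matrix.fromBlocks_map, Matrix.map_zero _ (_root_.map_zero _), hmapsmul,
        hmapsmul, hmapsmul]
      push_cast
      rfl
    have htc : (t : ℂ) ≠ 0 := Complex.ofReal_ne_zero.mpr ht0'
    refine ⟨hQmem, ?_⟩
    intro z hz
    rw [hspecQ, mem_spectrum_iff_det', hDtMc, hsplitB, Matrix.det_fromBlocks_zero₂₁] at hz
    rcases mul_eq_zero.mp hz with h0 | h0
    · -- z = t
      have hfac : z • (1 : Matrix (Fin n) (Fin n) ℂ) - (t : ℂ) • Ab.map (algebraMap ℝ ℂ) =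
          (t : ℂ) • ((z / (t : ℂ)) • 1 - Ab.map (algebraMap ℝ ℂ)) := by
        rw [smul_sub, smul_smul, mul_div_cancel₀ _ htc]
      rw [hfac, Matrix.det_smul] at h0
      have hdet0 : det ((z / (t : ℂ)) • (1 : Matrix (Fin n) (Fin n) ℂ) -
          Ab.map (algebraMap ℝ ℂ)) = 0 := by
        rcases mul_eq_zero.mp h0 with h | h
        · exact absurd h (pow_ne_zero _ htc)
        · exact h
      have hzt : (z / (t : ℂ)) ∈ spectrum ℂ (M.map (algebraMap ℝ ℂ)) := by
        rw [mem_spectrum_iff_det', hMc, hsplitB, Matrix.det_fromBlocks_zero₂₁, hdet0, zero_mul]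
      rw [hspecM] at hzt
      have hz1 : z / (t : ℂ) = 1 := hzt
      have hzt' : z = (t : ℂ) := by
        field_simp at hz1
        exact hz1
      rw [hzt']
      rw [Complex.norm_real, Real.norm_of_nonneg ht0.le]
      exact ne_of_gt ht
    · -- z = t⁻¹
      have hfac : z • (1 : Matrix (Fin n) (Fin n) ℂ) - ((t : ℂ))⁻¹ • Bb.map (algebraMap ℝ ℂ) =
          ((t : ℂ))⁻¹ • ((z * (t : ℂ)) • 1 - Bb.map (algebraMap ℝ ℂ)) := by
        rw [smul_sub, smul_smul]
        congr 2
        field_simp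
      rw [hfac, Matrix.det_smul] at h0
      have hdet0 : det ((z * (t : ℂ)) • (1 : Matrix (Fin n) (Fin n) ℂ) -
          Bb.map (algebraMap ℝ ℂ)) = 0 := by
        rcases mul_eq_zero.mp h0 with h | h
        · exact absurd h (pow_ne_zero _ (inv_ne_zero htc))
        · exact h
      have hzt : (z * (t : ℂ)) ∈ spectrum ℂ (M.map (algebraMap ℝ ℂ)) := by
        rw [mem_spectrum_iff_det', hMc, hsplitB, Matrix.det_fromBlocks_zero₂₁, hdet0, mul_zero]
      rw [hspecM] at hzt
      have hz1 : z * (t : ℂ) = 1 := hzt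
      have hzt' : z = ((t : ℂ))⁻¹ := by
        field_simp at hz1 ⊢
        linear_combination hz1
      rw [hzt', norm_inv, Complex.norm_real, Real.norm_of_nonneg ht0.le]
      intro hcon
      rw [inv_eq_one] at hcon
      exact (ne_of_gt ht) hcon
  -- the approximating sequence
  set tk : ℕ → ℝ := fun k => 1 + ((k : ℝ) + 1)⁻¹ with htkdef
  have htk1 : ∀ k, 1 < tk k := by
    intro k
    rw [htkdef]
    have : (0 : ℝ) < ((k : ℝ) + 1)⁻¹ := by positivity
    linarith
  have h0 : Filter.Tendsto (fun k : ℕ => ((k : ℝ) + 1)⁻¹) Filter.atTop (nhds 0) := by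
    simpa [one_div] using tendsto_one_div_add_atTop_nhds_zero_nat (𝕜 := ℝ)
  have htk : Filter.Tendsto tk Filter.atTop (nhds 1) := by
    have h1 := h0.const_add (1 : ℝ)
    simpa [htkdef] using h1
  have htkinv : Filter.Tendsto (fun k => (tk k)⁻¹) Filter.atTop (nhds 1) := by
    have := htk.inv₀ one_ne_zero
    simpa using this
  have hE : ∀ t : ℝ, Matrix.fromBlocks (t • (1 : Matrix (Fin n) (Fin n) ℝ)) 0 0 (t⁻¹ • 1) =
      t • (Matrix.fromBlocks (1 : Matrix (Fin n) (Fin n) ℝ) 0 0 (0 : Matrix (Fin n) (Fin n) ℝ)) +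
        t⁻¹ • (Matrix.fromBlocks (0 : Matrix (Fin n) (Fin n) ℝ) 0 0 (1 : Matrix (Fin n) (Fin n) ℝ)) := by
    intro t
    rw [Matrix.fromBlocks_smul, Matrix.fromBlocks_smul, Matrix.fromBlocks_add]
    simp
  have hDtend : Filter.Tendsto
      (fun k => Matrix.fromBlocks ((tk k) • (1 : Matrix (Fin n) (Fin n) ℝ)) 0 0 ((tk k)⁻¹ • 1))
      Filter.atTop (nhds (1 : Matrix (Fin n ⊕ Fin n) (Fin n ⊕ Fin n) ℝ)) := by
    have hlim := (htk.smul_const (Matrix.fromBlocks (1 : Matrix (Fin n) (Fin n) ℝ) 0 0 (0 : Matrix (Fin n) (Fin n) ℝ))).add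
      (htkinv.smul_const (Matrix.fromBlocks (0 : Matrix (Fin n) (Fin n) ℝ) 0 0 (1 : Matrix (Fin n) (Fin n) ℝ)))
    rw [one_smul, one_smul] at hlim
    have hone : (Matrix.fromBlocks (1 : Matrix (Fin n) (Fin n) ℝ) 0 0 (0 : Matrix (Fin n) (Fin n) ℝ)) +
        (Matrix.fromBlocks (0 : Matrix (Fin n) (Fin n) ℝ) 0 0 (1 : Matrix (Fin n) (Fin n) ℝ)) =
          (1 : Matrix (Fin n ⊕ Fin n) (Fin n ⊕ Fin n) ℝ) := by
      rw [Matrix.fromBlocks_add, ← Matrix.fromBlocks_one]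
      simp
    rw [hone] at hlim
    exact hlim.congr (fun k => (hE (tk k)).symm)
  have hQtend : Filter.Tendsto
      (fun k => Gm * Matrix.fromBlocks ((tk k) • (1 : Matrix (Fin n) (Fin n) ℝ)) 0 0
        ((tk k)⁻¹ • 1) * Gm⁻¹ * P) Filter.atTop (nhds P) := by
    have hmul : Filter.Tendsto
        (fun k => Gm * Matrix.fromBlocks ((tk k) • (1 : Matrix (Fin n) (Fin n) ℝ)) 0 0
          ((tk k)⁻¹ • 1) * Gm⁻¹ * P) Filter.atTop
        (nhds (Gm * (1 : Matrix (Fin n ⊕ Fin n) (Fin n ⊕ Fin n) ℝ) * Gm⁻¹ * P)) :=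
      ((tendsto_const_nhds.mul hDtend).mul tendsto_const_nhds).mul tendsto_const_nhds
    have heq : Gm * (1 : Matrix (Fin n ⊕ Fin n) (Fin n ⊕ Fin n) ℝ) * Gm⁻¹ * P = P := by
      rw [Matrix.mul_one, hGinv, Matrix.one_mul]
    rw [heq] at hmul
    exact hmul
  apply mem_closure_of_tendsto hQtend
  filter_upwards with k
  exact hkey (tk k) (htk1 k)
end
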